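/- Let 0 < c_1 < c_2. Then lim_{r ↓ 1} (2πi)^{-1} ∮_{|ξ|=1} log(√c_2 + √c_1 ξ) ( ξ/(ξ² − r^{-2}) − 1/ξ ) dξ = (1/2) log(1 − c_1/c_2), where the circle is traversed once counterclockwise and log denotes the principal branch of the complex logarithm (well defined since Re(√c_2 + √c_1 ξ) ≥ √c_2 − √c_1 > 0 on the unit circle). -/

import Mathlib

/-!
With `a = r⁻¹` inside the unit disc, partial fractions give
`ξ / (ξ² - a²) - ξ⁻¹ = ½ (ξ - a)⁻¹ + ½ (ξ + a)⁻¹ - ξ⁻¹`, so Cauchy's integral formula evaluates the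
normalised contour integral as `½ g(a) + ½ g(-a) - g(0)` for `g ξ = log (√c₂ + √c₁ ξ)`. This `g` is
holomorphic near the closed disc since `Re (√c₂ + √c₁ ξ) ≥ √c₂ - √c₁ > 0` there, so letting `r ↓ 1`
gives `½ log (√c₂ + √c₁) + ½ log (√c₂ - √c₁) - log √c₂ = ½ log (1 - c₁ / c₂)`.
-/

open Filter Complex Metric Topology

theorem div_sq_sub_sq_eq_inv_add_inv {K : Type*} [Field K] [NeZero (2 : K)] {x a : K}
    (h₁ : x - a ≠ 0) (h₂ : x + a ≠ 0) :
    x / (x ^ 2 - a ^ 2) = 2⁻¹ * (x - a)⁻¹ + 2⁻¹ * (x + a)⁻¹ := by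
  have h : x ^ 2 - a ^ 2 = (x - a) * (x + a) := by ring
  rw [h]
  field_simp
  ring

theorem DiffContOnCl.circleIntegrable_sub_inv_smul {E : Type*} [NormedAddCommGroup E]
    [NormedSpace ℂ E] {f : ℂ → E} {c w : ℂ} {R : ℝ} (hf : DiffContOnCl ℂ f (ball c R))
    (hw : w ∈ ball c R) : CircleIntegrable (fun z => (z - w)⁻¹ • f z) c R := by
  refine ContinuousOn.circleIntegrable (dist_nonneg.trans (mem_ball.1 hw).le) ?_
  refine ((continuousOn_id.sub continuousOn_const).inv₀ fun z hz => sub_ne_zero.2 ?_).smul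
    (hf.continuousOn_ball.mono sphere_subset_closedBall)
  rintro rfl
  exact (mem_sphere.1 hz).not_lt (mem_ball.1 hw) |>.elim

theorem DiffContOnCl.two_pi_I_inv_mul_circleIntegral_mul_div_sq_sub_sq_sub_inv {g : ℂ → ℂ}
    {R : ℝ} {a : ℂ} (hg : DiffContOnCl ℂ g (ball 0 R)) (ha : ‖a‖ < R) :
    (2 * (Real.pi : ℂ) * I)⁻¹ * ∮ ξ in C(0, R), g ξ * (ξ / (ξ ^ 2 - a ^ 2) - ξ⁻¹) =
      g a / 2 + g (-a) / 2 - g 0 := by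
  have hR : 0 < R := (norm_nonneg a).trans_lt ha
  have hmem_pos : a ∈ ball (0 : ℂ) R := by simpa using ha
  have hmem_neg : -a ∈ ball (0 : ℂ) R := by simpa using ha
  have hmem_zero : (0 : ℂ) ∈ ball (0 : ℂ) R := mem_ball_self hR
  have hsplit : Set.EqOn (fun ξ => g ξ * (ξ / (ξ ^ 2 - a ^ 2) - ξ⁻¹))
      (fun ξ => 2⁻¹ * ((ξ - a)⁻¹ • g ξ) + 2⁻¹ * ((ξ - -a)⁻¹ • g ξ) - (ξ - 0)⁻¹ • g ξ)
      (sphere 0 R) := by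
    intro ξ hξ
    have hξ : ‖ξ‖ = R := by simpa using hξ
    have hne : ∀ w : ℂ, ‖w‖ < R → ξ - w ≠ 0 := fun w hw h => by
      rw [sub_eq_zero.1 h] at hξ; exact hw.ne hξ
    have hdiv := div_sq_sub_sq_eq_inv_add_inv (hne a ha) (by simpa using hne (-a) (by simpa))
    simp only [hdiv, smul_eq_mul, sub_neg_eq_add, sub_zero]
    ring
  have hint := fun {w : ℂ} (hw : w ∈ ball (0 : ℂ) R) => hg.circleIntegrable_sub_inv_smul hw
  have hint_pos : CircleIntegrable (fun ξ => 2⁻¹ * ((ξ - a)⁻¹ • g ξ)) 0 R :=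
    (hint hmem_pos).const_smul
  have hint_neg : CircleIntegrable (fun ξ => 2⁻¹ * ((ξ - -a)⁻¹ • g ξ)) 0 R :=
    (hint hmem_neg).const_smul
  rw [circleIntegral.integral_congr hR.le hsplit,
    circleIntegral.integral_sub (f := fun ξ => 2⁻¹ * ((ξ - a)⁻¹ • g ξ) + 2⁻¹ * ((ξ - -a)⁻¹ • g ξ))
      (hint_pos.add hint_neg) (hint hmem_zero),
    circleIntegral.integral_add hint_pos hint_neg, circleIntegral.integral_const_mul,
    circleIntegral.integral_const_mul, hg.circleIntegral_sub_inv_smul hmem_pos,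
    hg.circleIntegral_sub_inv_smul hmem_neg, hg.circleIntegral_sub_inv_smul hmem_zero]
  field_simp [Real.pi_ne_zero, I_ne_zero]
  simp only [smul_eq_mul]
  ring

theorem DiffContOnCl.tendsto_two_pi_I_inv_mul_circleIntegral_mul_div_sq_sub_inv_sq_sub_inv
    {g : ℂ → ℂ} (hg : DiffContOnCl ℂ g (ball 0 1)) :
    Tendsto (fun r : ℝ => (2 * (Real.pi : ℂ) * I)⁻¹ *
        ∮ ξ in C(0, 1), g ξ * (ξ / (ξ ^ 2 - ((r : ℂ) ^ 2)⁻¹) - ξ⁻¹))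
      (𝓝[>] 1) (𝓝 (g 1 / 2 + g (-1) / 2 - g 0)) := by
  have hcont : ContinuousOn g (closedBall 0 1) := by
    simpa [closure_ball] using hg.continuousOn
  have hradial : ∀ s : ℂ, ‖s‖ = 1 →
      Tendsto (fun r : ℝ => s * (r : ℂ)⁻¹) (𝓝[>] 1) (𝓝[closedBall 0 1] s) := by
    intro s hs
    refine tendsto_nhdsWithin_iff.2 ⟨?_, eventually_nhdsWithin_of_forall fun r hr => ?_⟩
    · simpa using (((continuous_ofReal.tendsto 1).inv₀ (by simp)).const_mul s).mono_left
        nhdsWithin_le_nhds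
    · rw [mem_closedBall_zero_iff, norm_mul, hs, one_mul, norm_inv, norm_real,
        Real.norm_of_nonneg (zero_le_one.trans (le_of_lt hr))]
      exact inv_le_one_of_one_le₀ (le_of_lt hr)
  have hlim := ((((hcont 1 (by simp)).tendsto.comp (hradial 1 (by simp))).div_const 2).add
    (((hcont (-1) (by simp)).tendsto.comp (hradial (-1) (by simp))).div_const 2)).sub_const (g 0)
  refine hlim.congr' (eventuallyEq_nhdsWithin_of_eqOn fun r hr => ?_)
  have hr : ‖(r : ℂ)⁻¹‖ < 1 := by
    rw [norm_inv, norm_real, Real.norm_of_nonneg (zero_le_one.trans (le_of_lt hr))]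
    exact inv_lt_one_of_one_lt₀ hr
  rw [← inv_pow, hg.two_pi_I_inv_mul_circleIntegral_mul_div_sq_sub_sq_sub_inv hr]
  simp only [Function.comp_apply, one_mul, neg_one_mul]

theorem diffContOnCl_log_add_mul {α β : ℂ} (h : ‖β‖ < α.re) :
    DiffContOnCl ℂ (fun z => log (α + β * z)) (ball 0 1) := by
  refine DifferentiableOn.diffContOnCl_ball (U := closedBall 0 1)
    (fun ξ hξ => DifferentiableAt.differentiableWithinAt ?_) subset_rfl
  have hre : 0 < (α + β * ξ).re := by
    have hξ : ‖ξ‖ ≤ 1 := mem_closedBall_zero_iff.1 hξ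
    have hβξ : -(β * ξ).re ≤ ‖β‖ * ‖ξ‖ := by
      rw [← norm_mul]; exact (neg_le_abs _).trans (abs_re_le_norm _)
    rw [add_re]
    nlinarith [norm_nonneg β]
  exact (by fun_prop : DifferentiableAt ℂ (fun z => α + β * z) ξ).clog (Or.inl hre)

theorem Real.log_one_sub_div_eq {c₁ c₂ : ℝ} (h₁ : 0 ≤ c₁) (h₁₂ : c₁ < c₂) :
    Real.log (1 - c₁ / c₂) =
      Real.log (√c₂ + √c₁) + Real.log (√c₂ - √c₁) - 2 * Real.log √c₂ := by
  have hs : √c₁ < √c₂ := Real.sqrt_lt_sqrt h₁ h₁₂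
  have hs₁ : 0 ≤ √c₁ := Real.sqrt_nonneg c₁
  have hs₂ : 0 < √c₂ := hs₁.trans_lt hs
  have hfactor : 1 - c₁ / c₂ = (√c₂ + √c₁) * (√c₂ - √c₁) / √c₂ ^ 2 := by
    have hc₂ : 0 < c₂ := h₁.trans_lt h₁₂
    have hprod : (√c₂ + √c₁) * (√c₂ - √c₁) = c₂ - c₁ := by
      rw [← mul_self_sub_mul_self, Real.mul_self_sqrt hc₂.le, Real.mul_self_sqrt h₁]
    rw [hprod, Real.sq_sqrt hc₂.le]
    field_simp
  rw [hfactor, Real.log_div (by nlinarith) (by positivity), Real.log_mul (by linarith) (by linarith),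
    Real.log_pow]
  push_cast
  ring

/-- the residue computation ℰ₁(f₃):
`lim_{r↓1} (2πi)⁻¹ ∮_{|ξ|=1} log(√c₂ + √c₁ ξ)(ξ/(ξ² − r⁻²) − 1/ξ) dξ = ½ log(1 − c₁/c₂)`
for `0 < c₁ < c₂`, with the principal branch of the complex logarithm. -/
theorem stmt_13 (c1 c2 : ℝ) (h1 : 0 < c1) (h12 : c1 < c2) :
    Tendsto
      (fun r : ℝ =>
        (2 * (Real.pi : ℂ) * Complex.I)⁻¹ *
          ∮ ξ in C((0 : ℂ), 1),
            Complex.log ((Real.sqrt c2 : ℂ) + (Real.sqrt c1 : ℂ) * ξ) *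
              (ξ / (ξ ^ 2 - ((r : ℂ) ^ 2)⁻¹) - ξ⁻¹))
      (nhdsWithin (1 : ℝ) (Set.Ioi 1))
      (nhds ((Real.log (1 - c1 / c2) / 2 : ℝ) : ℂ)) := by
  have hs : √c1 < √c2 := Real.sqrt_lt_sqrt h1.le h12
  have hg : DiffContOnCl ℂ (fun ξ => log (√c2 + √c1 * ξ)) (ball 0 1) :=
    diffContOnCl_log_add_mul (by
      rwa [norm_real, Real.norm_of_nonneg (Real.sqrt_nonneg _), ofReal_re])
  convert hg.tendsto_two_pi_I_inv_mul_circleIntegral_mul_div_sq_sub_inv_sq_sub_inv using 2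
  simp only [mul_one, mul_neg_one, mul_zero, add_zero, ← sub_eq_add_neg]
  rw [← ofReal_add, ← ofReal_sub, ← ofReal_log (by positivity), ← ofReal_log (sub_nonneg.2 hs.le),
    ← ofReal_log (Real.sqrt_nonneg _), Real.log_one_sub_div_eq h1.le h12]
  push_cast
  ring
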